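/- arXiv:1705.01659 — 2 statements merged into one kernel-verified Lean document; each statement's English description precedes it below -/
import Mathlib

section
/- Let 𝔤 be the 5-dimensional (2,3,5) Lie algebra and work with matrices over U(𝔤). Define D₀ as the 2×1 matrix (X₁; X₂); D₁ as the 3×2 matrix with rows (−X₄ − X₁X₁X₂ − X₁X₃, X₁X₁X₁), (−X₅ − X₁X₂X₂, X₁X₁X₂ − 2X₁X₃), (−X₂X₂X₂, X₁X₂X₂ − 3X₂X₃); D₂ as the 3×3 matrix with rows (−X₁X₂ − X₃, X₁X₁, 0), (−X₂X₂, −3X₃, X₁X₁), (0, −X₂X₂, X₁X₂ − 2X₃); D₃ as the 2×3 matrix with rows (X₁X₂X₂ + X₂X₃ − 2X₅, −X₁X₁X₂ + X₄, X₁X₁X₁), (X₂X₂X₂, −X₁X₂X₂ + 2X₃X₂, X₁X₁X₂ − 3X₁X₃ + 3X₄); and D₄ as the 1×2 matrix (−X₂, X₁). Then D₁·D₀ = 0, D₂·D₁ = 0, D₃·D₂ = 0 and D₄·D₃ = 0 as matrices over U(𝔤); i.e. these explicit operators form the Bernstein–Gelfand–Gelfand complex of the trivial representation for a generic rank two distribution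 in dimension five. -/
private lemma sw {U : Type*} [Ring U] {a b c : U} (h : a * b - b * a = c) :
    a * b = b * a + c := by rw [← h]; noncomm_ring

private lemma sw' {U : Type*} [Ring U] {a b c : U} (h : a * b - b * a = c) (t : U) :
    a * (b * t) = b * (a * t) + c * t := by rw [← h]; noncomm_ring

set_option maxHeartbeats 4000000 in
/-- Let `𝔤` be the 5-dimensional (2,3,5) Lie algebra, i.e. the real Lie algebra
with basis `X₁,…,X₅` whose only nonzero brackets of basis elements are `⁅X₁,X₂⁆ = X₃`,
`⁅X₁,X₃⁆ = X₄` and `⁅X₂,X₃⁆ = X₅`.  Then, with `x i := ι(X i)` in `U(𝔤)`, the explicit matrices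
`D₀,…,D₄` of the BGG complex of the trivial representation for a generic rank two distribution in
dimension five satisfy `D₁·D₀ = 0`, `D₂·D₁ = 0`, `D₃·D₂ = 0`, `D₄·D₃ = 0`. -/
theorem statement14 {L : Type*} [LieRing L] [LieAlgebra ℝ L]
    (X : Module.Basis (Fin 5) ℝ L)
    (h12 : ⁅X 0, X 1⁆ = X 2) (h13 : ⁅X 0, X 2⁆ = X 3) (h23 : ⁅X 1, X 2⁆ = X 4)
    (h14 : ⁅X 0, X 3⁆ = 0) (h15 : ⁅X 0, X 4⁆ = 0)
    (h24 : ⁅X 1, X 3⁆ = 0) (h25 : ⁅X 1, X 4⁆ = 0)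
    (h34 : ⁅X 2, X 3⁆ = 0) (h35 : ⁅X 2, X 4⁆ = 0) (h45 : ⁅X 3, X 4⁆ = 0) :
    letI U := UniversalEnvelopingAlgebra ℝ L
    letI x : Fin 5 → U := fun i => UniversalEnvelopingAlgebra.ι ℝ (X i)
    letI D0 : Matrix (Fin 2) (Fin 1) U := !![x 0; x 1]
    letI D1 : Matrix (Fin 3) (Fin 2) U :=
      !![-(x 3) - x 0 * x 0 * x 1 - x 0 * x 2, x 0 * x 0 * x 0;
         -(x 4) - x 0 * x 1 * x 1, x 0 * x 0 * x 1 - 2 * (x 0 * x 2);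
         -(x 1 * x 1 * x 1), x 0 * x 1 * x 1 - 3 * (x 1 * x 2)]
    letI D2 : Matrix (Fin 3) (Fin 3) U :=
      !![-(x 0 * x 1) - x 2, x 0 * x 0, 0;
         -(x 1 * x 1), -(3 * x 2), x 0 * x 0;
         0, -(x 1 * x 1), x 0 * x 1 - 2 * x 2]
    letI D3 : Matrix (Fin 2) (Fin 3) U :=
      !![x 0 * x 1 * x 1 + x 1 * x 2 - 2 * x 4, -(x 0 * x 0 * x 1) + x 3, x 0 * x 0 * x 0;
         x 1 * x 1 * x 1, -(x 0 * x 1 * x 1) + 2 * (x 2 * x 1),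
           x 0 * x 0 * x 1 - 3 * (x 0 * x 2) + 3 * x 3]
    letI D4 : Matrix (Fin 1) (Fin 2) U := !![-(x 1), x 0]
    D1 * D0 = 0 ∧ D2 * D1 = 0 ∧ D3 * D2 = 0 ∧ D4 * D3 = 0 := by
  beta_reduce
  set a := UniversalEnvelopingAlgebra.ι ℝ (X 0) with ha
  set b := UniversalEnvelopingAlgebra.ι ℝ (X 1) with hb
  set c := UniversalEnvelopingAlgebra.ι ℝ (X 2) with hc
  set d := UniversalEnvelopingAlgebra.ι ℝ (X 3) with hd
  set e := UniversalEnvelopingAlgebra.ι ℝ (X 4) with he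
  have key : ∀ i j : Fin 5, UniversalEnvelopingAlgebra.ι ℝ (X i) *
      UniversalEnvelopingAlgebra.ι ℝ (X j) - UniversalEnvelopingAlgebra.ι ℝ (X j) *
      UniversalEnvelopingAlgebra.ι ℝ (X i) =
      UniversalEnvelopingAlgebra.ι ℝ ⁅X i, X j⁆ := fun i j => by
    letI := LieRing.ofAssociativeRing (A := UniversalEnvelopingAlgebra ℝ L)
    rw [LieHom.map_lie, Ring.lie_def]
  have r01 : a * b - b * a = c := by rw [ha, hb, hc, key, h12]
  have r02 : a * c - c * a = d := by rw [ha, hc, hd, key, h13]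
  have r12 : b * c - c * b = e := by rw [hb, hc, he, key, h23]
  have z : ∀ (i j : Fin 5), ⁅X i, X j⁆ = 0 → UniversalEnvelopingAlgebra.ι ℝ (X i) *
      UniversalEnvelopingAlgebra.ι ℝ (X j) - UniversalEnvelopingAlgebra.ι ℝ (X j) *
      UniversalEnvelopingAlgebra.ι ℝ (X i) = 0 := by
    intro i j h; rw [key, h]; exact (UniversalEnvelopingAlgebra.ι ℝ).map_zero
  have neg' : ∀ {a b c : UniversalEnvelopingAlgebra ℝ L}, a * b - b * a = c → b * a - a * b = -c := by
    intro a b c h; rw [← h]; noncomm_ring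
  have r10 := neg' r01
  have r20 := neg' r02
  have r21 := neg' r12
  have r03 : a * d - d * a = 0 := by rw [ha, hd]; exact z 0 3 h14
  have r04 : a * e - e * a = 0 := by rw [ha, he]; exact z 0 4 h15
  have r13 : b * d - d * b = 0 := by rw [hb, hd]; exact z 1 3 h24
  have r14 : b * e - e * b = 0 := by rw [hb, he]; exact z 1 4 h25
  have r23 : c * d - d * c = 0 := by rw [hc, hd]; exact z 2 3 h34
  have r24 : c * e - e * c = 0 := by rw [hc, he]; exact z 2 4 h35
  have r34 : d * e - e * d = 0 := by rw [hd, he]; exact z 3 4 h45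
  have r30 := neg' r03
  have r40 := neg' r04
  have r31 := neg' r13
  have r41 := neg' r14
  have r32 := neg' r23
  have r42 := neg' r24
  have r43 := neg' r34
  refine ⟨?_, ?_, ?_, ?_⟩ <;>
  · ext i j
    fin_cases i <;> fin_cases j <;>
    · simp [Matrix.mul_apply, Fin.sum_univ_succ]
      simp only [sw r10, sw' r10, sw r20, sw' r20, sw r21, sw' r21, sw r30, sw' r30,
        sw r31, sw' r31, sw r32, sw' r32, sw r40, sw' r40, sw r41, sw' r41, sw r42, sw' r42,
        sw r43, sw' r43, mul_assoc, mul_add, add_mul, mul_sub, sub_mul, mul_neg, neg_mul,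
        mul_zero, zero_mul, neg_zero, add_zero, zero_add, smul_add, smul_neg]
      try noncomm_ring
      all_goals try simp only [sw r10, sw' r10, sw r20, sw' r20, sw r21, sw' r21, sw r30, sw' r30,
        sw r31, sw' r31, sw r32, sw' r32, sw r40, sw' r40, sw r41, sw' r41, sw r42, sw' r42,
        sw r43, sw' r43, mul_assoc, mul_add, add_mul, mul_sub, sub_mul, mul_neg, neg_mul,
        mul_zero, zero_mul, neg_zero, add_zero, zero_add, smul_add, smul_neg]
      all_goals try noncomm_ring
      all_goals abel
end

section
/- Let 𝔤 be the Engel Lie algebra and work with matrices over U(𝔤). Define: B₁ as the 4×2 matrix with rows (−1, 0), (X₁, −1), (−X₁X₂, X₂), (−X₁X₁X₂ − X₄, X₁X₂); B₂ as the 2×4 matrix with rows (X₃, −X₂, −1, 0), (X₄, 0, X₁, −1); G₂ as the 4×4 matrix with rows (1,0,0,0), (−X₁,1,0,0), (X₁X₂,−X₂,1,0), (X₁X₁X₂ + X₄, −X₁X₂, 0, 1); G₃ as the 2×2 matrix with rows (1,0), (−X₁,1); C₁ as the 4×2 matrix with rows (−1,0), (0,−1), (0,0), (0,0); and C₂ as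 the 2×4 matrix with rows (0,0,−1,0), (0,0,0,−1). Then B₁ = G₂·C₁ and B₂·G₂ = G₃·C₂, and the matrices G₂ and G₃ are invertible in the respective matrix rings over U(𝔤); consequently G₂^{-1}·B₁ = C₁ and G₃^{-1}·B₂·G₂ = C₂, i.e. the complementary part B of the conjugated de Rham complex of the left invariant Engel structure is conjugate, by invertible matrices with entries in U(𝔤), to the constant acyclic (tensorial) complex given by C₁ and C₂. -/
set_option maxHeartbeats 2000000


/-- Let `𝔤` be the Engel Lie algebra (basis `X₁,…,X₄`, nonzero brackets
`⁅X₁,X₂⁆ = X₃`, `⁅X₁,X₃⁆ = X₄`).  With the explicit matrices `B₁, B₂, G₂, G₃, C₁, C₂` over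
`U(𝔤)` below one has `B₁ = G₂·C₁` and `B₂·G₂ = G₃·C₂`, the matrices `G₂` and `G₃` are invertible
in the respective matrix rings over `U(𝔤)`, and consequently `G₂⁻¹·B₁ = C₁` and
`G₃⁻¹·B₂·G₂ = C₂`: the complementary part `B` of the conjugated de Rham complex of the left
invariant Engel structure is conjugate, by invertible matrices with entries in `U(𝔤)`, to the
constant acyclic (tensorial) complex given by `C₁` and `C₂`. -/
theorem statement15 {L : Type*} [LieRing L] [LieAlgebra ℝ L]
    (X : Module.Basis (Fin 4) ℝ L)
    (h12 : ⁅X 0, X 1⁆ = X 2) (h13 : ⁅X 0, X 2⁆ = X 3)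
    (h14 : ⁅X 0, X 3⁆ = 0) (h23 : ⁅X 1, X 2⁆ = 0)
    (h24 : ⁅X 1, X 3⁆ = 0) (h34 : ⁅X 2, X 3⁆ = 0) :
    letI U := UniversalEnvelopingAlgebra ℝ L
    letI x : Fin 4 → U := fun i => UniversalEnvelopingAlgebra.ι ℝ (X i)
    letI B1 : Matrix (Fin 4) (Fin 2) U :=
      !![-1, 0;
         x 0, -1;
         -(x 0 * x 1), x 1;
         -(x 0 * x 0 * x 1) - x 3, x 0 * x 1]
    letI B2 : Matrix (Fin 2) (Fin 4) U :=
      !![x 2, -(x 1), -1, 0;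
         x 3, 0, x 0, -1]
    letI G2 : Matrix (Fin 4) (Fin 4) U :=
      !![1, 0, 0, 0;
         -(x 0), 1, 0, 0;
         x 0 * x 1, -(x 1), 1, 0;
         x 0 * x 0 * x 1 + x 3, -(x 0 * x 1), 0, 1]
    letI G3 : Matrix (Fin 2) (Fin 2) U := !![1, 0; -(x 0), 1]
    letI C1 : Matrix (Fin 4) (Fin 2) U := !![-1, 0; 0, -1; 0, 0; 0, 0]
    letI C2 : Matrix (Fin 2) (Fin 4) U := !![0, 0, -1, 0; 0, 0, 0, -1]
    B1 = G2 * C1 ∧ B2 * G2 = G3 * C2 ∧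
    (∃ G2i : Matrix (Fin 4) (Fin 4) U, G2i * G2 = 1 ∧ G2 * G2i = 1 ∧ G2i * B1 = C1) ∧
    (∃ G3i : Matrix (Fin 2) (Fin 2) U, G3i * G3 = 1 ∧ G3 * G3i = 1 ∧ G3i * (B2 * G2) = C2) := by
  set x : Fin 4 → UniversalEnvelopingAlgebra ℝ L :=
    fun i => UniversalEnvelopingAlgebra.ι ℝ (X i) with hxdef
  have hx2 : x 2 = x 0 * x 1 - x 1 * x 0 := by
    letI : LieRing (UniversalEnvelopingAlgebra ℝ L) := LieRing.ofAssociativeRing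
    have := (UniversalEnvelopingAlgebra.ι ℝ (L := L)).map_lie (X 0) (X 1)
    rw [h12] at this
    simpa [hxdef, Ring.lie_def] using this
  refine ⟨?_, ?_,
    ⟨!![1, 0, 0, 0;
        x 0, 1, 0, 0;
        -(x 2), x 1, 1, 0;
        -(x 0 * x 2) - x 3, x 0 * x 1, 0, 1], ?_, ?_, ?_⟩,
    ⟨!![1, 0; x 0, 1], ?_, ?_, ?_⟩⟩
  all_goals
    ext i j
    fin_cases i <;> fin_cases j <;>
      simp [Matrix.mul_apply, Fin.sum_univ_succ, Matrix.one_apply, Matrix.vecHead,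
        Matrix.vecTail, hx2] <;> noncomm_ring
end
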